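/- arXiv:2207.03867 — 2 statements merged into one kernel-verified Lean document; each statement's English description precedes it below -/
import Mathlib

section
/- The natural density of the set of squarefree positive integers equals 6/π², i.e. equals 1/ζ(2). -/
open Filter Finset ArithmeticFunction
open scoped ArithmeticFunction.Moebius ArithmeticFunction.zeta Topology

/-!
Writing `n = k² a` with `a` squarefree, the divisors `d` with `d² ∣ n` are exactly the divisors
of `k`, so `∑_{d² ∣ n} μ d` is the indicator of squarefreeness. Summing over `n ≤ N` and swapping
the sums gives `#{n ≤ N squarefree} = ∑_{d ≤ N} μ d ⌊N / d²⌋`. After dividing by `N`, each term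
tends to `μ d / d²` and is bounded by `1 / d²`, so by Tannery's theorem the density is
`∑ μ d / d² = 1 / ζ(2) = 6 / π²`.
-/

namespace Nat

theorem sq_dvd_sq_mul_iff_dvd {a k d : ℕ} (ha : Squarefree a) : d ^ 2 ∣ k ^ 2 * a ↔ d ∣ k := by
  refine ⟨fun h => ?_, fun h => (pow_dvd_pow_of_dvd h 2).mul_right a⟩
  rcases eq_or_ne k 0 with rfl | hk
  · exact dvd_zero d
  have hka : k ^ 2 * a ≠ 0 := mul_ne_zero (pow_ne_zero 2 hk) ha.ne_zero
  have hd : d ≠ 0 := by rintro rfl; exact hka (zero_dvd_iff.mp (by simpa using h))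
  rw [← factorization_le_iff_dvd hd hk]
  intro p
  have hp := (factorization_le_iff_dvd (pow_ne_zero 2 hd) hka).2 h p
  simp only [factorization_mul (pow_ne_zero 2 hk) ha.ne_zero, factorization_pow,
    Finsupp.coe_add, Finsupp.coe_smul, Pi.add_apply, Pi.smul_apply, smul_eq_mul] at hp
  have := ha.natFactorization_le_one p
  omega

theorem tendsto_div_const_div_atTop (m : ℕ) :
    Tendsto (fun N : ℕ => ((N / m : ℕ) : ℝ) / N) atTop (𝓝 (1 / m)) := by
  rcases eq_or_ne m 0 with rfl | hm
  · simp
  have hm' : (0 : ℝ) < m := by positivity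
  have hfloor : Tendsto (fun N : ℕ => (⌊(N : ℝ) / m⌋₊ : ℝ) / (N / m) / m) atTop (𝓝 (1 / m)) :=
    (tendsto_nat_floor_div_atTop.comp
      ((tendsto_natCast_atTop_atTop).atTop_div_const hm')).div_const _
  refine hfloor.congr fun N => ?_
  rw [floor_div_eq_div]
  field_simp

theorem cast_div_div_le (N m : ℕ) : ((N / m : ℕ) : ℝ) / N ≤ 1 / m :=
  div_le_of_le_mul₀ N.cast_nonneg (by positivity)
    (by simpa [div_eq_inv_mul] using cast_div_le (α := ℝ))

end Nat

namespace ArithmeticFunction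

theorem sum_moebius_filter_sq_dvd {n : ℕ} (hn : n ≠ 0) :
    ∑ d ∈ n.divisors with d ^ 2 ∣ n, μ d = if Squarefree n then 1 else 0 := by
  obtain ⟨a, k, rfl, ha⟩ := Nat.sq_mul_squarefree n
  have hk : k ≠ 0 := by rintro rfl; simp at hn
  have hfilter : {d ∈ (k ^ 2 * a).divisors | d ^ 2 ∣ k ^ 2 * a} = k.divisors := by
    ext d
    simp only [mem_filter, Nat.mem_divisors, Nat.sq_dvd_sq_mul_iff_dvd ha]
    exact ⟨fun h => ⟨h.2, hk⟩,
      fun h => ⟨⟨h.1.trans ((dvd_pow_self k two_ne_zero).mul_right a), hn⟩, h.1⟩⟩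
  have hsqf : Squarefree (k ^ 2 * a) ↔ k = 1 := by
    refine ⟨fun h => Nat.isUnit_iff.mp (h k ⟨a, by ring⟩), ?_⟩
    rintro rfl
    simpa using ha
  rw [hfilter, ← coe_mul_zeta_apply, moebius_mul_coe_zeta, one_apply]
  exact if_congr hsqf.symm rfl rfl

theorem card_filter_squarefree_Icc_eq_sum_moebius (N : ℕ) :
    (#{n ∈ Icc 1 N | Squarefree n} : ℤ) = ∑ d ∈ Icc 1 N, μ d * (N / d ^ 2 : ℕ) := by
  calc (#{n ∈ Icc 1 N | Squarefree n} : ℤ)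
      = ∑ n ∈ Icc 1 N, ∑ d ∈ n.divisors with d ^ 2 ∣ n, μ d := by
        rw [card_filter, Nat.cast_sum]
        refine sum_congr rfl fun n hn => ?_
        rw [sum_moebius_filter_sq_dvd (by simp at hn; omega)]
        split_ifs <;> rfl
    _ = ∑ d ∈ Icc 1 N, ∑ n ∈ Icc 1 N with d ^ 2 ∣ n, μ d := by
        refine sum_comm' fun n d => ?_
        simp only [mem_Icc, mem_filter, Nat.mem_divisors]
        constructor
        · rintro ⟨⟨hn1, hnN⟩, ⟨hdn, -⟩, hd2⟩
          exact ⟨⟨⟨hn1, hnN⟩, hd2⟩, Nat.pos_of_dvd_of_pos hdn hn1,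
            (Nat.le_of_dvd hn1 hdn).trans hnN⟩
        · rintro ⟨⟨⟨hn1, hnN⟩, hd2⟩, -⟩
          exact ⟨⟨hn1, hnN⟩, ⟨(dvd_pow_self d two_ne_zero).trans hd2, by omega⟩, hd2⟩
    _ = ∑ d ∈ Icc 1 N, μ d * (N / d ^ 2 : ℕ) := by
        refine sum_congr rfl fun d _ => ?_
        rw [sum_const, show Icc 1 N = Ioc 0 N from rfl, Nat.Ioc_filter_dvd_card_eq_div,
          nsmul_eq_mul, mul_comm]

theorem hasSum_moebius_div_sq :
    HasSum (fun d : ℕ => (μ d : ℝ) / (d : ℝ) ^ 2) (6 / Real.pi ^ 2) := by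
  have hs : (1 : ℝ) < (2 : ℂ).re := by norm_num
  have hL : LSeries (fun n => (μ n : ℂ)) 2 = ((6 / Real.pi ^ 2 : ℝ) : ℂ) := by
    have h := LSeries_zeta_mul_Lseries_moebius hs
    rw [LSeries_zeta_eq_riemannZeta hs, riemannZeta_two] at h
    have hpi : (Real.pi : ℂ) ≠ 0 := Complex.ofReal_ne_zero.mpr Real.pi_ne_zero
    push_cast
    field_simp at h ⊢
    linear_combination h
  have hterm : LSeries.term (fun n => (μ n : ℂ)) 2
      = fun d : ℕ => (((μ d : ℝ) / (d : ℝ) ^ 2 : ℝ) : ℂ) := by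
    ext d
    rw [LSeries.term_of_ne_zero' two_ne_zero, Complex.cpow_two]
    push_cast
    rfl
  rw [← Complex.hasSum_ofReal, ← hterm, ← hL]
  exact (LSeriesSummable_moebius_iff.mpr hs).hasSum

theorem card_filter_squarefree_Icc_div_eq_tsum (N : ℕ) :
    (#{n ∈ Icc 1 N | Squarefree n} : ℝ) / N
      = ∑' d : ℕ, (μ d : ℝ) * (((N / d ^ 2 : ℕ) : ℝ) / N) := by
  have hsupp : ∀ d ∉ Icc 1 N, (μ d : ℝ) * (((N / d ^ 2 : ℕ) : ℝ) / N) = 0 := by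
    intro d hd
    rcases Nat.eq_zero_or_pos d with rfl | hd0
    · simp
    have hNd : N / d ^ 2 = 0 :=
      Nat.div_eq_of_lt ((not_le.mp fun h => hd (mem_Icc.mpr ⟨hd0, h⟩)).trans_le
        (Nat.le_self_pow two_ne_zero d))
    simp [hNd]
  rw [tsum_eq_sum hsupp, ← Int.cast_natCast, card_filter_squarefree_Icc_eq_sum_moebius]
  simp only [Int.cast_sum, Int.cast_mul, Int.cast_natCast, sum_div, mul_div_assoc]

end ArithmeticFunction

theorem stmt_9 :
    Tendsto (fun N : ℕ => (((Finset.Icc 1 N).filter Squarefree).card : ℝ) / N)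
      atTop (nhds (6 / Real.pi ^ 2)) := by
  have hpointwise (d : ℕ) : Tendsto (fun N : ℕ => (μ d : ℝ) * (((N / d ^ 2 : ℕ) : ℝ) / N)) atTop
      (𝓝 ((μ d : ℝ) / (d : ℝ) ^ 2)) := by
    have h := (Nat.tendsto_div_const_div_atTop (d ^ 2)).const_mul (μ d : ℝ)
    rwa [Nat.cast_pow, mul_one_div] at h
  have hdominated (N d : ℕ) : ‖(μ d : ℝ) * (((N / d ^ 2 : ℕ) : ℝ) / N)‖ ≤ 1 / (d : ℝ) ^ 2 := by
    rw [norm_mul, Real.norm_eq_abs, Real.norm_of_nonneg (by positivity), ← one_mul (1 / _)]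
    refine mul_le_mul (by exact_mod_cast abs_moebius_le_one) ?_ (by positivity) zero_le_one
    have h := Nat.cast_div_div_le N (d ^ 2)
    rwa [Nat.cast_pow] at h
  have hlim := tendsto_tsum_of_dominated_convergence
    (Real.summable_one_div_nat_pow.mpr one_lt_two) hpointwise (.of_forall hdominated)
  rw [ArithmeticFunction.hasSum_moebius_div_sq.tsum_eq] at hlim
  exact hlim.congr fun N => (ArithmeticFunction.card_filter_squarefree_Icc_div_eq_tsum N).symm
end

section
/- For a nontrivial Dirichlet character χ modulo N, the Dirichlet L-function L(χ, s) = ∑_{n≥1} χ(n) n^{-s} extends continuously to s = 1 with a finite value, and L(χ, 1) ≠ 0. -/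
theorem stmt_15 (N : ℕ) [NeZero N] (χ : DirichletCharacter ℂ N) (hχ : χ ≠ 1) :
    ∃ L : ℂ → ℂ, ContinuousAt L 1 ∧
      (∀ s : ℂ, 1 < s.re → L s = ∑' n : ℕ, χ n / (n : ℂ) ^ s) ∧
      L 1 ≠ 0 := by
  refine ⟨χ.LFunction, (χ.differentiableAt_LFunction 1 (Or.inr hχ)).continuousAt, ?_,
    χ.LFunction_apply_one_ne_zero hχ⟩
  intro s hs
  rw [χ.LFunction_eq_LSeries hs, LSeries]
  congr 1 with n
  rcases eq_or_ne n 0 with rfl | hn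
  · have h0 : (0 : ℂ) ^ s = 0 := Complex.zero_cpow (fun h ↦ by rw [h] at hs; norm_num at hs)
    simp [LSeries.term, h0]
  · simp [LSeries.term, hn, div_eq_mul_inv]
end
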